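/- arXiv:1707.04791 — 4 statements merged into one kernel-verified Lean document; each statement's English description precedes it below -/
import Mathlib

section
/- Let p > 2, let p' = p/2, and let T ≥ r ≥ 1 be integers. Define D_p(T,r) = inf over w ∈ ℝ^T with w ≥ 0 and ‖w‖_{p'} ≤ 1 of ∑_{i=1}^r (∑_{ℓ=1}^{T-r+i} w_ℓ)^{-1}. Then (T−r+1)^{2/p} (H_T − H_{T−r}) ≤ D_p(T,r) ≤ T^{2/p} (H_T − H_{T−r}). -/
/-! By the power-mean inequality, `∑ ℓ ≤ m, w ℓ ≤ m ^ (1 - 2/p)` whenever `∑ ℓ ≤ m, w ℓ ^ (p/2) ≤ 1`,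
so with `m = T - r + i` the `i`-th term is at least `m ^ (2/p) / m ≥ (T - r + 1) ^ (2/p) / m`;
summing over `i` gives the lower bound. The constant vector `w ℓ = T ^ (-2/p)` is feasible and
realizes the upper bound. -/

open Finset Real

lemma sum_le_card_rpow_of_sum_rpow_le_one {ι : Type*} (s : Finset ι) {q : ℝ} (hq : 1 ≤ q)
    {w : ι → ℝ} (hw : ∀ i ∈ s, 0 ≤ w i) (h : ∑ i ∈ s, w i ^ q ≤ 1) :
    ∑ i ∈ s, w i ≤ (#s : ℝ) ^ (1 - q⁻¹) := by
  have hq0 : 0 < q := by linarith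
  have hsum : 0 ≤ ∑ i ∈ s, w i := sum_nonneg hw
  have hpow : (∑ i ∈ s, w i) ^ q ≤ (#s : ℝ) ^ (q - 1) :=
    (rpow_sum_le_const_mul_sum_rpow_of_nonneg s hq hw).trans
      (mul_le_of_le_one_right (by positivity) h)
  calc ∑ i ∈ s, w i = ((∑ i ∈ s, w i) ^ q) ^ q⁻¹ := (rpow_rpow_inv hsum hq0.ne').symm
    _ ≤ ((#s : ℝ) ^ (q - 1)) ^ q⁻¹ := by gcongr
    _ = (#s : ℝ) ^ (1 - q⁻¹) := by
      rw [← rpow_mul (by positivity)]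
      congr 1
      field_simp

lemma card_rpow_inv_div_card_le_inv_sum {ι : Type*} (s : Finset ι) {q : ℝ} (hq : 1 ≤ q)
    {w : ι → ℝ} (hw : ∀ i ∈ s, 0 ≤ w i) (h : ∑ i ∈ s, w i ^ q ≤ 1)
    (hpos : 0 < ∑ i ∈ s, w i) :
    (#s : ℝ) ^ q⁻¹ / #s ≤ (∑ i ∈ s, w i)⁻¹ := by
  have hs : (0 : ℝ) < #s := by
    exact_mod_cast card_pos.mpr (nonempty_of_sum_ne_zero hpos.ne')
  calc (#s : ℝ) ^ q⁻¹ / #s = ((#s : ℝ) ^ (1 - q⁻¹))⁻¹ := by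
        rw [← rpow_neg hs.le, neg_sub, rpow_sub hs, rpow_one]
    _ ≤ (∑ i ∈ s, w i)⁻¹ := inv_anti₀ hpos (sum_le_card_rpow_of_sum_rpow_le_one s hq hw h)

lemma sum_Icc_sub_add_one {M : Type*} [AddCommMonoid M] {r T : ℕ} (hrT : r ≤ T) (f : ℕ → M) :
    ∑ k ∈ Icc (T - r + 1) T, f k = ∑ i ∈ Icc 1 r, f (T - r + i) := by
  have hIcc : Icc (T - r + 1) T = (Icc 1 r).map (addLeftEmbedding (T - r)) := by
    rw [map_add_left_Icc, Nat.sub_add_cancel hrT]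
  rw [hIcc, sum_map]
  rfl

/-- `D_p(T, r) = sInf (partialSumInvValues (p / 2) T r)`. -/
def partialSumInvValues (q : ℝ) (T r : ℕ) : Set ℝ :=
  {s : ℝ | ∃ w : ℕ → ℝ, (∀ ℓ, 0 ≤ w ℓ) ∧
    (∑ ℓ ∈ Icc 1 T, w ℓ ^ q) ≤ 1 ∧
    (∀ i ∈ Icc 1 r, 0 < ∑ ℓ ∈ Icc 1 (T - r + i), w ℓ) ∧
    s = ∑ i ∈ Icc 1 r, (∑ ℓ ∈ Icc 1 (T - r + i), w ℓ)⁻¹}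

lemma rpow_mul_harmonic_mem_lowerBounds {q : ℝ} (hq : 1 ≤ q) {T r : ℕ} (hrT : r ≤ T) :
    ((T : ℝ) - r + 1) ^ q⁻¹ * ∑ k ∈ Icc (T - r + 1) T, (1 : ℝ) / k ∈
      lowerBounds (partialSumInvValues q T r) := by
  rintro _ ⟨w, hw, hnorm, hpos, rfl⟩
  rw [sum_Icc_sub_add_one hrT, mul_sum]
  refine sum_le_sum fun i hi => ?_
  have hi' := mem_Icc.mp hi
  have hsub : ∑ ℓ ∈ Icc 1 (T - r + i), w ℓ ^ q ≤ 1 :=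
    (sum_le_sum_of_subset_of_nonneg (Icc_subset_Icc_right (by omega))
      fun ℓ _ _ => rpow_nonneg (hw ℓ) _).trans hnorm
  have hterm := card_rpow_inv_div_card_le_inv_sum _ hq (fun ℓ _ => hw ℓ) hsub (hpos i hi)
  rw [Nat.card_Icc, Nat.add_sub_cancel] at hterm
  refine le_trans ?_ hterm
  have hcast : (T : ℝ) - r + 1 = ((T - r + 1 : ℕ) : ℝ) := by push_cast [Nat.cast_sub hrT]; ring
  rw [mul_one_div, hcast]
  gcongr
  exact hi'.1

lemma rpow_mul_harmonic_mem_partialSumInvValues {q : ℝ} (hq : q ≠ 0) {T r : ℕ} (hT : 0 < T)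
    (hrT : r ≤ T) :
    (T : ℝ) ^ q⁻¹ * ∑ k ∈ Icc (T - r + 1) T, (1 : ℝ) / k ∈ partialSumInvValues q T r := by
  have hT' : (0 : ℝ) < T := by exact_mod_cast hT
  have hc : 0 < (T : ℝ) ^ (-q⁻¹) := rpow_pos_of_pos hT' _
  refine ⟨fun _ => (T : ℝ) ^ (-q⁻¹), fun _ => hc.le, ?_, fun i hi => ?_, ?_⟩
  · rw [sum_const, Nat.card_Icc, Nat.add_sub_cancel, nsmul_eq_mul, ← rpow_mul hT'.le,
      neg_mul, inv_mul_cancel₀ hq, rpow_neg_one, mul_inv_cancel₀ hT'.ne']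
  · rw [sum_const, nsmul_eq_mul]
    have : 0 < #(Icc 1 (T - r + i)) := by
      rw [Nat.card_Icc]; have := (mem_Icc.mp hi).1; omega
    positivity
  · rw [sum_Icc_sub_add_one hrT, mul_sum]
    refine sum_congr rfl fun i _ => ?_
    rw [sum_const, Nat.card_Icc, Nat.add_sub_cancel, nsmul_eq_mul, mul_inv, rpow_neg hT'.le,
      inv_inv, one_div, mul_comm]

theorem Dp_harmonic_bounds (p : ℝ) (hp : 2 < p) (T r : ℕ) (hr : 1 ≤ r) (hTr : r ≤ T) :
    ((T : ℝ) - r + 1) ^ ((2 : ℝ) / p) * (∑ k ∈ Finset.Icc (T - r + 1) T, (1 : ℝ) / k) ≤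
      sInf {s : ℝ | ∃ w : ℕ → ℝ, (∀ ℓ, 0 ≤ w ℓ) ∧
        (∑ ℓ ∈ Finset.Icc 1 T, w ℓ ^ (p / 2)) ≤ 1 ∧
        (∀ i ∈ Finset.Icc 1 r, 0 < ∑ ℓ ∈ Finset.Icc 1 (T - r + i), w ℓ) ∧
        s = ∑ i ∈ Finset.Icc 1 r, (∑ ℓ ∈ Finset.Icc 1 (T - r + i), w ℓ)⁻¹} ∧
    sInf {s : ℝ | ∃ w : ℕ → ℝ, (∀ ℓ, 0 ≤ w ℓ) ∧
        (∑ ℓ ∈ Finset.Icc 1 T, w ℓ ^ (p / 2)) ≤ 1 ∧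
        (∀ i ∈ Finset.Icc 1 r, 0 < ∑ ℓ ∈ Finset.Icc 1 (T - r + i), w ℓ) ∧
        s = ∑ i ∈ Finset.Icc 1 r, (∑ ℓ ∈ Finset.Icc 1 (T - r + i), w ℓ)⁻¹} ≤
      (T : ℝ) ^ ((2 : ℝ) / p) * (∑ k ∈ Finset.Icc (T - r + 1) T, (1 : ℝ) / k) := by
  change _ ≤ sInf (partialSumInvValues (p / 2) T r) ∧ sInf (partialSumInvValues (p / 2) T r) ≤ _
  have hexp : (2 : ℝ) / p = (p / 2)⁻¹ := (inv_div p 2).symm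
  have lower := rpow_mul_harmonic_mem_lowerBounds (q := p / 2) (by linarith) hTr
  have mem := rpow_mul_harmonic_mem_partialSumInvValues (q := p / 2) (by positivity) (by omega) hTr
  rw [hexp]
  exact ⟨le_csInf ⟨_, mem⟩ lower, csInf_le ⟨_, lower⟩ mem⟩
end

section
/- Fix integers T, n with n ≥ T ≥ 1 and a weight vector w ∈ ℂ^T. Let z_i = e^{2πj i/n} for i = 0,...,n−1, let φ(z) = (1, z, ..., z^{T−1}), and let Toep(v) denote the T×T lower-triangular Toeplitz matrix with first column v. Then ∑_{i=0}^{n−1} Toep(w ⊙ φ(z_i))* Toep(w ⊙ φ(z_i)) = n · diag(∑_{i=1}^T |w_i|², ∑_{i=1}^{T−1} |w_i|², ..., |w_1|²), where ⊙ denotes entrywise product. -/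
open Matrix Complex

/-- Lower-triangular Toeplitz matrix with first column `v`. -/
def ToepC {T : ℕ} (v : Fin T → ℂ) : Matrix (Fin T) (Fin T) ℂ :=
  fun k ℓ => if (ℓ : ℕ) ≤ (k : ℕ) then
    v ⟨(k : ℕ) - (ℓ : ℕ), lt_of_le_of_lt (Nat.sub_le _ _) k.isLt⟩ else 0

/-!
Modulating the first column by the powers of a unimodular `z` conjugates the Toeplitz matrix by
the diagonal unitary `D_z = diag(1, z, …, z^(T-1))`, so every summand is `D_z G D_zᴴ` with
`G = Toep(w)ᴴ Toep(w)`. Summed over the `n`-th roots of unity `z = ζ^i`, entry `(k, ℓ)` picks up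
the factor `∑ᵢ ζ^(i(k-ℓ))`, which vanishes for `0 < |k - ℓ| < n`. Only `n` times the diagonal
of `G` survives, and `G k k` is the squared norm of column `k` of `Toep(w)`, i.e.
`∑_{j < T-k} |w_j|²`.
-/

open Finset

theorem IsPrimitiveRoot.geom_sum_zpow_eq_zero {K : Type*} [Field K] {ζ : K} {n : ℕ}
    (hζ : IsPrimitiveRoot ζ n) {d : ℤ} (hd : ¬ (n : ℤ) ∣ d) :
    ∑ i ∈ range n, (ζ ^ d) ^ i = 0 := by
  have hne : ζ ^ d ≠ 1 := by rwa [Ne, hζ.zpow_eq_one_iff_dvd]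
  have hpow : (ζ ^ d) ^ n = 1 := by
    rw [← zpow_natCast, ← _root_.zpow_mul, mul_comm, _root_.zpow_mul, hζ.zpow_eq_one,
      _root_.one_zpow]
  refine eq_zero_of_ne_zero_of_mul_left_eq_zero (sub_ne_zero_of_ne hne.symm) ?_
  rw [mul_neg_geom_sum, hpow, sub_self]

theorem IsPrimitiveRoot.sum_pow_mul_star_pow {ζ : ℂ} {n k ℓ : ℕ} (hζ : IsPrimitiveRoot ζ n)
    (hk : k < n) (hℓ : ℓ < n) :
    ∑ i ∈ range n, (ζ ^ i) ^ k * star ((ζ ^ i) ^ ℓ) = if k = ℓ then (n : ℂ) else 0 := by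
  have hn : n ≠ 0 := by omega
  have hstar : star ζ = ζ⁻¹ := (inv_eq_conj (hζ.norm'_eq_one hn)).symm
  have hterm (i : ℕ) : (ζ ^ i) ^ k * star ((ζ ^ i) ^ ℓ) = (ζ ^ ((k : ℤ) - ℓ)) ^ i := by
    rw [star_pow, star_pow, hstar, zpow_sub₀ (hζ.ne_zero hn), zpow_natCast, zpow_natCast]
    ring
  simp_rw [hterm]
  split_ifs with hkℓ
  · simp [hkℓ]
  · refine hζ.geom_sum_zpow_eq_zero fun hdvd => hkℓ ?_
    have := Int.eq_zero_of_abs_lt_dvd hdvd (by rw [abs_lt]; omega)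
    omega

theorem sum_diagonal_pow_mul_mul_conjTranspose {T n : ℕ} (hTn : T ≤ n) {ζ : ℂ}
    (hζ : IsPrimitiveRoot ζ n) (G : Matrix (Fin T) (Fin T) ℂ) :
    ∑ i ∈ range n, diagonal (fun k : Fin T => (ζ ^ i) ^ (k : ℕ)) * G *
        (diagonal (fun k : Fin T => (ζ ^ i) ^ (k : ℕ)))ᴴ = (n : ℂ) • diagonal G.diag := by
  ext k ℓ
  simp only [Matrix.sum_apply, diagonal_conjTranspose, mul_diagonal, diagonal_mul, Pi.star_apply,
    Matrix.smul_apply, smul_eq_mul, diagonal_apply, diag_apply]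
  calc ∑ i ∈ range n, (ζ ^ i) ^ (k : ℕ) * G k ℓ * star ((ζ ^ i) ^ (ℓ : ℕ))
      = G k ℓ * ∑ i ∈ range n, (ζ ^ i) ^ (k : ℕ) * star ((ζ ^ i) ^ (ℓ : ℕ)) := by
        rw [mul_sum]; exact sum_congr rfl fun i _ => by ring
    _ = _ := by
        rw [hζ.sum_pow_mul_star_pow (k := k) (ℓ := ℓ) (by omega) (by omega)]
        by_cases h : k = ℓ
        · simp [h, mul_comm]
        · simp [h, Fin.val_inj]

theorem Matrix.conjTranspose_mul_self_conj {m R : Type*} [Fintype m] [DecidableEq m] [Semiring R]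
    [StarRing R] {U : Matrix m m R} (hU : Uᴴ * U = 1) (A : Matrix m m R) :
    (U * A * Uᴴ)ᴴ * (U * A * Uᴴ) = U * (Aᴴ * A) * Uᴴ := by
  simp only [conjTranspose_mul, conjTranspose_conjTranspose, Matrix.mul_assoc]
  rw [← Matrix.mul_assoc Uᴴ U, hU, Matrix.one_mul]

theorem ToepC_mul_pow {T : ℕ} (w : Fin T → ℂ) {z : ℂ} (hz : ‖z‖ = 1) :
    ToepC (fun k => w k * z ^ (k : ℕ)) =
      diagonal (fun k : Fin T => z ^ (k : ℕ)) * ToepC w *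
        (diagonal (fun k : Fin T => z ^ (k : ℕ)))ᴴ := by
  have hz' : z * star z = 1 := by simp [RCLike.mul_conj, hz]
  ext k ℓ
  simp only [ToepC, diagonal_conjTranspose, mul_diagonal, diagonal_mul, Pi.star_apply]
  split_ifs with h
  · have hpow : z ^ (k : ℕ) * star (z ^ (ℓ : ℕ)) = z ^ ((k : ℕ) - ℓ) := by
      rw [star_pow, ← Nat.sub_add_cancel h, pow_add, mul_assoc, ← mul_pow, hz', one_pow, mul_one,
        Nat.add_sub_cancel]
    rw [mul_comm (z ^ (k : ℕ)), mul_assoc, hpow]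
  · simp

theorem conjTranspose_ToepC_mul_pow_mul_self {T : ℕ} (w : Fin T → ℂ) {z : ℂ} (hz : ‖z‖ = 1) :
    (ToepC (fun k => w k * z ^ (k : ℕ)))ᴴ * ToepC (fun k => w k * z ^ (k : ℕ)) =
      diagonal (fun k : Fin T => z ^ (k : ℕ)) * ((ToepC w)ᴴ * ToepC w) *
        (diagonal (fun k : Fin T => z ^ (k : ℕ)))ᴴ := by
  have hD : (diagonal (fun k : Fin T => z ^ (k : ℕ)))ᴴ *
      diagonal (fun k : Fin T => z ^ (k : ℕ)) = 1 := by
    rw [diagonal_conjTranspose, diagonal_mul_diagonal, ← diagonal_one]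
    congr 1
    funext k
    simp [← mul_pow, RCLike.conj_mul, hz]
  rw [ToepC_mul_pow w hz, conjTranspose_mul_self_conj hD]

theorem conjTranspose_ToepC_mul_ToepC_apply_self {T : ℕ} (w : Fin T → ℂ) (k : Fin T) :
    ((ToepC w)ᴴ * ToepC w) k k =
      ((∑ i : Fin (T - (k : ℕ)), ‖w ⟨(i : ℕ), by have := i.isLt; omega⟩‖ ^ 2 : ℝ) : ℂ) := by
  simp only [mul_apply, conjTranspose_apply, RCLike.star_def, RCLike.conj_mul]
  norm_cast
  congr 1
  symm
  refine Fintype.sum_of_injective (M := ℝ) (fun i : Fin (T - k) => (⟨i + k, by omega⟩ : Fin T))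
    (fun i j hij => by simpa [Fin.ext_iff] using hij) _ _ ?_ ?_
  · intro m hm
    have : ¬ (k : ℕ) ≤ m := fun hkm => hm ⟨⟨m - k, by omega⟩, by ext; simp; omega⟩
    simp [ToepC, this]
  · intro i
    simp [ToepC]

theorem toeplitz_sinusoid_covariance (T n : ℕ) (hT : 1 ≤ T) (hn : T ≤ n) (w : Fin T → ℂ) :
    ∑ i ∈ Finset.range n,
        (ToepC (fun k => w k * Complex.exp (2 * Real.pi * Complex.I * i / n) ^ (k : ℕ))).conjTranspose
          * ToepC (fun k => w k * Complex.exp (2 * Real.pi * Complex.I * i / n) ^ (k : ℕ)) =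
      (n : ℂ) • Matrix.diagonal
        (fun k : Fin T => ((∑ i : Fin (T - (k : ℕ)), ‖w ⟨(i : ℕ), by have := i.isLt; omega⟩‖ ^ 2 : ℝ) : ℂ)) := by
  have hn0 : n ≠ 0 := by omega
  set ζ := exp (2 * Real.pi * I / n)
  have hζ : IsPrimitiveRoot ζ n := isPrimitiveRoot_exp n hn0
  have hexp (i : ℕ) : exp (2 * Real.pi * I * i / n) = ζ ^ i := by
    rw [← exp_nat_mul]; ring_nf
  simp_rw [hexp]
  calc _ = ∑ i ∈ range n, diagonal (fun k : Fin T => (ζ ^ i) ^ (k : ℕ)) * ((ToepC w)ᴴ * ToepC w) *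
          (diagonal (fun k : Fin T => (ζ ^ i) ^ (k : ℕ)))ᴴ :=
        sum_congr rfl fun i _ => conjTranspose_ToepC_mul_pow_mul_self w
          (by rw [norm_pow, hζ.norm'_eq_one hn0, one_pow])
    _ = (n : ℂ) • diagonal ((ToepC w)ᴴ * ToepC w).diag :=
        sum_diagonal_pow_mul_mul_conjTranspose hn hζ _
    _ = _ := by
        congr 2
        funext k
        exact conjTranspose_ToepC_mul_ToepC_apply_self w k
end

section
/- Let r ≥ 1, let z_k = e^{2πj k/r} for k = 0,...,r−1, let φ(z) = (1, z, ..., z^{r−1}) ∈ ℂ^r, and let Toep_{2r×2r}(v) denote the 2r×2r lower-triangular Toeplitz matrix formed by treating v ∈ ℂ^r as a zero-padded sequence. Then (1/r) ∑_{k=0}^{r−1} Toep_{2r×2r}(φ(z_k))* Toep_{2r×2r}(φ(z_k)) = diag(r, ..., r, r, r−1, ..., 1), where the entry r is repeated r+1 times starting from position 1 (i.e., the diagonal is r for the first r entries, then r, r−1, ..., 1). -/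
open Matrix Complex

/-- `2r × 2r` lower-triangular Toeplitz matrix formed from `v ∈ ℂ^r`, zero-padded. -/
def ToepPad (r : ℕ) (v : Fin r → ℂ) : Matrix (Fin (2 * r)) (Fin (2 * r)) ℂ :=
  fun k ℓ => if h : (ℓ : ℕ) ≤ (k : ℕ) ∧ (k : ℕ) - (ℓ : ℕ) < r then
    v ⟨(k : ℕ) - (ℓ : ℕ), h.2⟩ else 0

lemma sum_zeta (r : ℕ) (hr : 1 ≤ r) (d : ℤ) :
    ∑ k ∈ Finset.range r, ((Complex.exp (2 * Real.pi * Complex.I / r)) ^ d) ^ k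
      = if (r:ℤ) ∣ d then (r:ℂ) else 0 := by
  have hr0 : (r:ℕ) ≠ 0 := by omega
  have hprim := Complex.isPrimitiveRoot_exp r hr0
  by_cases h : (r:ℤ) ∣ d
  · have h1 : (Complex.exp (2 * Real.pi * Complex.I / r)) ^ d = 1 :=
      (hprim.zpow_eq_one_iff_dvd d).mpr h
    simp [h1, h]
  · have h1 : (Complex.exp (2 * Real.pi * Complex.I / r)) ^ d ≠ 1 := by
      intro hc
      exact h ((hprim.zpow_eq_one_iff_dvd d).mp hc)
    rw [geom_sum_eq h1]
    have : ((Complex.exp (2 * Real.pi * Complex.I / r)) ^ d) ^ r = 1 := by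
      rw [← zpow_natCast _ r, ← _root_.zpow_mul, mul_comm d (r:ℤ), _root_.zpow_mul, zpow_natCast, hprim.pow_eq_one, _root_.one_zpow]
    simp [this, h]

theorem dft_toeplitz_gram_diagonal (r : ℕ) (hr : 1 ≤ r) :
    (1 / (r : ℂ)) • ∑ k ∈ Finset.range r,
        (ToepPad r (fun i => Complex.exp (2 * Real.pi * Complex.I * k / r) ^ (i : ℕ))).conjTranspose
          * ToepPad r (fun i => Complex.exp (2 * Real.pi * Complex.I * k / r) ^ (i : ℕ)) =
      Matrix.diagonal (fun i : Fin (2 * r) => ((min (2 * r - (i : ℕ)) r : ℕ) : ℂ)) := by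
  have hrC : (r:ℂ) ≠ 0 := Nat.cast_ne_zero.mpr (by omega)
  set ζ : ℂ := Complex.exp (2 * Real.pi * Complex.I / r) with hζ
  ext i j
  simp only [Matrix.smul_apply, Matrix.sum_apply, Matrix.mul_apply, Matrix.conjTranspose_apply,
    ToepPad, smul_eq_mul, Complex.star_def]
  rw [Finset.sum_comm]
  have key : ∀ m : Fin (2*r),
      (∑ k ∈ Finset.range r,
        (starRingEnd ℂ) (if h : (i:ℕ) ≤ (m:ℕ) ∧ (m:ℕ) - (i:ℕ) < r then
            Complex.exp (2 * Real.pi * Complex.I * k / r) ^ ((m:ℕ) - (i:ℕ)) else 0) *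
        (if h : (j:ℕ) ≤ (m:ℕ) ∧ (m:ℕ) - (j:ℕ) < r then
            Complex.exp (2 * Real.pi * Complex.I * k / r) ^ ((m:ℕ) - (j:ℕ)) else 0))
      = if ((i:ℕ) ≤ (m:ℕ) ∧ (m:ℕ) - (i:ℕ) < r) ∧ ((j:ℕ) ≤ (m:ℕ) ∧ (m:ℕ) - (j:ℕ) < r) then
          (if (r:ℤ) ∣ ((i:ℕ):ℤ) - ((j:ℕ):ℤ) then (r:ℂ) else 0) else 0 := by
    intro m
    by_cases hc : ((i:ℕ) ≤ (m:ℕ) ∧ (m:ℕ) - (i:ℕ) < r) ∧ ((j:ℕ) ≤ (m:ℕ) ∧ (m:ℕ) - (j:ℕ) < r)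
    · rw [if_pos hc, ← sum_zeta r hr]
      refine Finset.sum_congr rfl (fun k _ => ?_)
      rw [dif_pos hc.1, dif_pos hc.2]
      have harg : (starRingEnd ℂ) (2 * (Real.pi:ℂ) * Complex.I * k / r)
          = -(2 * (Real.pi:ℂ) * Complex.I * k / r) := by
        simp only [map_div₀, _root_.map_mul, map_ofNat, Complex.conj_ofReal, Complex.conj_I,
          Complex.conj_natCast]
        ring
      rw [← Complex.exp_nat_mul, ← Complex.exp_nat_mul, ← Complex.exp_conj, _root_.map_mul,
        Complex.conj_natCast, harg, ← Complex.exp_add, ← Complex.exp_int_mul,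
        ← Complex.exp_nat_mul]
      congr 1
      push_cast [hc.1.1, hc.2.1]
      ring
    · rw [if_neg hc]
      refine Finset.sum_eq_zero (fun k _ => ?_)
      rcases not_and_or.mp hc with h | h
      · rw [dif_neg h, map_zero, zero_mul]
      · rw [dif_neg h, mul_zero]
  rw [Finset.sum_congr rfl (fun m _ => key m)]
  by_cases hij : i = j
  · subst hij
    have hdvd : (r:ℤ) ∣ ((i:ℕ):ℤ) - ((i:ℕ):ℤ) := by simp
    simp only [and_self, hdvd, if_true]
    rw [Fin.sum_univ_eq_sum_range (fun m => if (i:ℕ) ≤ m ∧ m - (i:ℕ) < r then (r:ℂ) else 0)]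
    have hform : ∀ m ∈ Finset.range (2*r),
        (if (i:ℕ) ≤ m ∧ m - (i:ℕ) < r then (r:ℂ) else 0)
        = if m ∈ Finset.Ico (i:ℕ) ((i:ℕ) + r) then (r:ℂ) else 0 := by
      intro m _
      congr 1
      simp only [Finset.mem_Ico, eq_iff_iff]
      omega
    rw [Finset.sum_congr rfl hform, Finset.sum_ite_mem]
    rw [Finset.range_eq_Ico, Finset.Ico_inter_Ico, Finset.sum_const]
    have hcard : (Finset.Ico (max 0 (i:ℕ)) (min (2*r) ((i:ℕ)+r))).card = min (2*r - (i:ℕ)) r := by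
      rw [Nat.card_Ico]
      have := i.isLt
      omega
    rw [hcard, Matrix.diagonal_apply_eq, nsmul_eq_mul]
    field_simp
  · rw [Matrix.diagonal_apply_ne _ hij]
    have : ∀ m : Fin (2*r),
        (if ((i:ℕ) ≤ (m:ℕ) ∧ (m:ℕ) - (i:ℕ) < r) ∧ ((j:ℕ) ≤ (m:ℕ) ∧ (m:ℕ) - (j:ℕ) < r) then
          (if (r:ℤ) ∣ ((i:ℕ):ℤ) - ((j:ℕ):ℤ) then (r:ℂ) else 0) else 0) = 0 := by
      intro m
      by_cases hc : ((i:ℕ) ≤ (m:ℕ) ∧ (m:ℕ) - (i:ℕ) < r) ∧ ((j:ℕ) ≤ (m:ℕ) ∧ (m:ℕ) - (j:ℕ) < r)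
      · rw [if_pos hc, if_neg]
        intro hdvd
        have hne : (i:ℕ) ≠ (j:ℕ) := fun h => hij (Fin.ext h)
        obtain ⟨⟨ha1, ha2⟩, ha3, ha4⟩ := hc
        have hd0 : ((i:ℕ):ℤ) - ((j:ℕ):ℤ) ≠ 0 := by omega
        have habs : |((i:ℕ):ℤ) - ((j:ℕ):ℤ)| < r := by
          rw [abs_lt]; omega
        have := Int.le_of_dvd (abs_pos.mpr hd0) ((dvd_abs _ _).mpr hdvd)
        omega
      · rw [if_neg hc]
    rw [Finset.sum_congr rfl (fun m _ => this m), Finset.sum_const_zero, mul_zero]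
end

section
/- Let Q(z) = ∑_{k=0}^{r−1} c_k z^{k} with complex coefficients c_k, and let N ≥ 4πr be an integer. Then sup_{|z|=1} |Q(z)| ≤ (1 + 4πr/N) · max_{k=0,...,N−1} |Q(e^{2πjk/N})|. -/
/-!
Discretization through a reproducing kernel sampled at the `N`-th roots of unity.
For `A ≤ N` and `r + B ≤ A + 1`, the kernel `(∑_{k<A} wᵏ) · conj (∑_{l<B} wˡ)` has Fourier
coefficients forming a trapezoid of height `B` whose plateau covers the degrees `0, …, r - 1`,
and its support is short enough that the discrete orthogonality of the roots of unity sees no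
aliasing. Hence `N B Q(z)` is the sum over the nodes `u` of `Q(u) K(z ū)`, so
`N B ‖Q(z)‖ ≤ max ‖Q(u)‖ · ∑ ‖K(z ū)‖`. By AM-GM and the discrete Parseval identity the
kernel mass is at most `N (A + B) / 2`. Taking `A = N`, `B = N + 1 - r` gives the factor
`1 + (r - 1) / (2 (N + 1 - r)) ≤ 1 + 4πr / N`.
-/

open Finset ComplexConjugate

def geomSum (n : ℕ) (w : ℂ) : ℂ := ∑ k ∈ range n, w ^ k

def trapezoidKernel (A B : ℕ) (w : ℂ) : ℂ := geomSum A w * conj (geomSum B w)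

theorem trapezoidKernel_eq_sum (A B : ℕ) (w : ℂ) :
    trapezoidKernel A B w = ∑ k ∈ range A, ∑ l ∈ range B, w ^ k * conj w ^ l := by
  simp only [trapezoidKernel, geomSum, map_sum, map_pow, sum_mul_sum]

theorem trapezoidKernel_self (B : ℕ) (w : ℂ) :
    trapezoidKernel B B w = (‖geomSum B w‖ ^ 2 : ℝ) := by
  rw [trapezoidKernel, Complex.mul_conj', Complex.ofReal_pow]

theorem norm_trapezoidKernel_le (A B : ℕ) (w : ℂ) :
    ‖trapezoidKernel A B w‖ ≤ (‖geomSum A w‖ ^ 2 + ‖geomSum B w‖ ^ 2) / 2 := by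
  rw [trapezoidKernel, norm_mul, Complex.norm_conj]
  linarith [two_mul_le_add_sq ‖geomSum A w‖ ‖geomSum B w‖]

namespace IsPrimitiveRoot

variable {N : ℕ} {ζ z : ℂ}

theorem sum_pow_mul_conj_pow (hζ : IsPrimitiveRoot ζ N) {p q : ℕ} (hp : p < q + N)
    (hq : q < p + N) :
    ∑ j ∈ range N, (ζ ^ j) ^ p * conj (ζ ^ j) ^ q = if p = q then (N : ℂ) else 0 := by
  have hN : N ≠ 0 := by omega
  have hζ0 : ζ ≠ 0 := hζ.ne_zero hN
  have hterm (j : ℕ) : (ζ ^ j) ^ p * conj (ζ ^ j) ^ q = (ζ ^ ((p : ℤ) - q)) ^ j := by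
    rw [← Complex.inv_eq_conj (by rw [norm_pow, hζ.norm'_eq_one hN, one_pow])]
    simp only [← zpow_natCast, ← zpow_neg, ← zpow_mul, ← zpow_add₀ hζ0]
    ring_nf
  simp_rw [hterm]
  split_ifs with hpq
  · simp [hpq]
  · have hne : ζ ^ ((p : ℤ) - q) ≠ 1 := by
      rw [Ne, hζ.zpow_eq_one_iff_dvd]
      intro hdvd
      have := Int.eq_zero_of_abs_lt_dvd hdvd (by rw [abs_lt]; omega)
      omega
    rw [geom_sum_eq hne, ← zpow_natCast, ← zpow_mul, mul_comm, zpow_mul, zpow_natCast,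
      hζ.pow_eq_one, one_zpow, sub_self, zero_div]

theorem sum_pow_mul_trapezoidKernel (hζ : IsPrimitiveRoot ζ N) (hz : ‖z‖ = 1) {m A B : ℕ}
    (hA : A ≤ N) (hmB : m + B ≤ A) :
    ∑ j ∈ range N, (ζ ^ j) ^ m * trapezoidKernel A B (z * conj (ζ ^ j)) = N * B * z ^ m := by
  have hzz (l : ℕ) : z ^ l * conj z ^ l = 1 := by
    rw [← mul_pow, Complex.mul_conj', hz]; norm_num
  calc ∑ j ∈ range N, (ζ ^ j) ^ m * trapezoidKernel A B (z * conj (ζ ^ j))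
      = ∑ k ∈ range A, ∑ l ∈ range B,
          z ^ k * conj z ^ l * ∑ j ∈ range N, (ζ ^ j) ^ (m + l) * conj (ζ ^ j) ^ k := by
        simp only [trapezoidKernel_eq_sum, mul_sum]
        rw [sum_comm]
        refine sum_congr rfl fun k _ => ?_
        rw [sum_comm]
        refine sum_congr rfl fun l _ => sum_congr rfl fun j _ => ?_
        simp only [map_mul, Complex.conj_conj]
        ring
    _ = ∑ l ∈ range B, ∑ k ∈ range A, if m + l = k then z ^ k * conj z ^ l * N else 0 := by
        rw [sum_comm]
        refine sum_congr rfl fun l hl => sum_congr rfl fun k hk => ?_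
        rw [mem_range] at hk hl
        rw [hζ.sum_pow_mul_conj_pow (by omega) (by omega), mul_ite, mul_zero]
    _ = ∑ l ∈ range B, N * z ^ m := by
        refine sum_congr rfl fun l hl => ?_
        rw [mem_range] at hl
        rw [sum_ite_eq, if_pos (mem_range.2 (by omega))]
        linear_combination (N * z ^ m) * hzz l
    _ = N * B * z ^ m := by
        rw [sum_const, card_range, nsmul_eq_mul]
        ring

theorem sum_norm_geomSum_sq (hζ : IsPrimitiveRoot ζ N) (hz : ‖z‖ = 1) {B : ℕ} (hB : B ≤ N) :
    ∑ j ∈ range N, ‖geomSum B (z * conj (ζ ^ j))‖ ^ 2 = N * B := by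
  have h := hζ.sum_pow_mul_trapezoidKernel hz (m := 0) hB (zero_add B).le
  simp only [pow_zero, one_mul, mul_one, trapezoidKernel_self] at h
  exact_mod_cast h

theorem sum_norm_trapezoidKernel_le (hζ : IsPrimitiveRoot ζ N) (hz : ‖z‖ = 1) {A B : ℕ}
    (hA : A ≤ N) (hB : B ≤ N) :
    ∑ j ∈ range N, ‖trapezoidKernel A B (z * conj (ζ ^ j))‖ ≤ N * (A + B) / 2 :=
  calc ∑ j ∈ range N, ‖trapezoidKernel A B (z * conj (ζ ^ j))‖
      ≤ ∑ j ∈ range N,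
          (‖geomSum A (z * conj (ζ ^ j))‖ ^ 2 + ‖geomSum B (z * conj (ζ ^ j))‖ ^ 2) / 2 :=
        sum_le_sum fun j _ => norm_trapezoidKernel_le A B _
    _ = N * (A + B) / 2 := by
        rw [← sum_div, sum_add_distrib, hζ.sum_norm_geomSum_sq hz hA,
          hζ.sum_norm_geomSum_sq hz hB, mul_add]

theorem sum_mul_trapezoidKernel (hζ : IsPrimitiveRoot ζ N) {r : ℕ} (c : Fin r → ℂ)
    (hz : ‖z‖ = 1) {A B : ℕ} (hA : A ≤ N) (hrB : r + B ≤ A + 1) :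
    ∑ j ∈ range N,
        (∑ m : Fin r, c m * (ζ ^ j) ^ (m : ℕ)) * trapezoidKernel A B (z * conj (ζ ^ j))
      = N * B * ∑ m : Fin r, c m * z ^ (m : ℕ) := by
  simp only [sum_mul, mul_sum]
  rw [sum_comm]
  refine sum_congr rfl fun m _ => ?_
  simp only [mul_assoc]
  rw [← mul_sum, hζ.sum_pow_mul_trapezoidKernel hz hA (by omega)]
  ring

theorem norm_sum_mul_pow_le (hζ : IsPrimitiveRoot ζ N) {r : ℕ} (c : Fin r → ℂ) (hz : ‖z‖ = 1)
    {A B : ℕ} (hA : A ≤ N) (hB : 0 < B) (hBA : B ≤ A) (hrB : r + B ≤ A + 1) {M : ℝ}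
    (hM : ∀ j < N, ‖∑ m : Fin r, c m * (ζ ^ j) ^ (m : ℕ)‖ ≤ M) :
    ‖∑ m : Fin r, c m * z ^ (m : ℕ)‖ ≤ (A + B) / (2 * B) * M := by
  have hM0 : 0 ≤ M := (norm_nonneg _).trans (hM 0 (by omega))
  have key : N * B * ‖∑ m : Fin r, c m * z ^ (m : ℕ)‖ ≤ M * (N * (A + B) / 2) :=
    calc N * B * ‖∑ m : Fin r, c m * z ^ (m : ℕ)‖
        = ‖∑ j ∈ range N, (∑ m : Fin r, c m * (ζ ^ j) ^ (m : ℕ)) *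
            trapezoidKernel A B (z * conj (ζ ^ j))‖ := by
          rw [hζ.sum_mul_trapezoidKernel c hz hA hrB, norm_mul, norm_mul, Complex.norm_natCast,
            Complex.norm_natCast]
      _ ≤ ∑ j ∈ range N, M * ‖trapezoidKernel A B (z * conj (ζ ^ j))‖ := by
          refine (norm_sum_le _ _).trans (sum_le_sum fun j hj => ?_)
          rw [norm_mul]
          exact mul_le_mul_of_nonneg_right (hM j (mem_range.1 hj)) (norm_nonneg _)
      _ ≤ M * (N * (A + B) / 2) := by
          rw [← mul_sum]
          exact mul_le_mul_of_nonneg_left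
            (hζ.sum_norm_trapezoidKernel_le hz hA (hBA.trans hA)) hM0
  have hNB : (0 : ℝ) < N * B := by
    have : 0 < N := by omega
    positivity
  rw [div_mul_eq_mul_div, le_div_iff₀ (by positivity)]
  nlinarith

end IsPrimitiveRoot

theorem polynomial_discretization_bound (r : ℕ) (hr : 1 ≤ r) (c : Fin r → ℂ)
    (N : ℕ) (hN : 4 * Real.pi * r ≤ N) (z : ℂ) (hz : ‖z‖ = 1) :
    ‖∑ k : Fin r, c k * z ^ (k : ℕ)‖ ≤
      (1 + 4 * Real.pi * r / N) *
        (Finset.range N).sup'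
          (Finset.nonempty_range_iff.mpr (by
            intro h; rw [h] at hN; push_cast at hN; nlinarith [Real.pi_pos, (show (1:ℝ) ≤ r by exact_mod_cast hr)]))
          (fun k => ‖∑ j : Fin r,
            c j * Complex.exp (2 * Real.pi * Complex.I * k / N) ^ (j : ℕ)‖) := by
  have hr1 : (1 : ℝ) ≤ r := by exact_mod_cast hr
  have h2rN : 2 * (r : ℝ) ≤ N := by nlinarith [Real.pi_gt_three]
  have hrN : r ≤ N := by exact_mod_cast (by linarith : (r : ℝ) ≤ N)
  have hζ := Complex.isPrimitiveRoot_exp N (by omega)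
  have hnode (k : ℕ) : Complex.exp (2 * Real.pi * Complex.I * k / N)
      = Complex.exp (2 * Real.pi * Complex.I / N) ^ k := by
    rw [← Complex.exp_nat_mul]; ring_nf
  set M := (range N).sup' _ (fun k : ℕ => ‖∑ j : Fin r,
    c j * Complex.exp (2 * Real.pi * Complex.I * k / N) ^ (j : ℕ)‖)
  have hM (j : ℕ) (hj : j < N) :
      ‖∑ m : Fin r, c m * (Complex.exp (2 * Real.pi * Complex.I / N) ^ j) ^ (m : ℕ)‖ ≤ M := by
    rw [← hnode]
    exact le_sup' (fun k : ℕ => ‖∑ j : Fin r,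
      c j * Complex.exp (2 * Real.pi * Complex.I * k / N) ^ (j : ℕ)‖) (mem_range.2 hj)
  have hM0 : 0 ≤ M := (norm_nonneg _).trans (hM 0 (by omega))
  refine (hζ.norm_sum_mul_pow_le c hz le_rfl (B := N + 1 - r) (by omega) (by omega) (by omega)
    hM).trans (mul_le_mul_of_nonneg_right ?_ hM0)
  have hB : ((N + 1 - r : ℕ) : ℝ) = N + 1 - r := by
    push_cast [Nat.cast_sub (by omega : r ≤ N + 1)]
    ring
  have hK : 0 ≤ 4 * Real.pi * r / N := by positivity
  have hKN : 4 * Real.pi * r / N * N = 4 * Real.pi * r := div_mul_cancel₀ _ (by linarith)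
  rw [hB, div_le_iff₀ (by linarith)]
  nlinarith [mul_le_mul_of_nonneg_left (by linarith : (N : ℝ) ≤ 2 * (N + 1 - r)) hK,
    Real.pi_gt_three]
end
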